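/- arXiv:2304.04804 — 4 statements merged into one kernel-verified Lean document; each statement's English description precedes it below -/
import Mathlib

section
/- For every integer a, the matrix [[a,−1],[−1,0]] equals A·B⁻¹·A²·B⁻¹·A·C·B⁻¹·A·B^(−a−1). -/
open Matrix

def A : (Matrix (Fin 2) (Fin 2) ℤ)ˣ :=
  ⟨!![1,1;0,1], !![1,-1;0,1], by decide, by decide⟩

def B : (Matrix (Fin 2) (Fin 2) ℤ)ˣ :=
  ⟨!![1,0;1,1], !![1,0;-1,1], by decide, by decide⟩

def C : (Matrix (Fin 2) (Fin 2) ℤ)ˣ :=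
  ⟨!![1,0;0,-1], !![1,0;0,-1], by decide, by decide⟩

theorem lowerShear_mul_lowerShear {R : Type*} [NonAssocSemiring R] (x y : R) :
    !![1, 0; x, 1] * !![1, 0; y, 1] = !![1, 0; x + y, (1 : R)] := by
  simp

theorem val_B_zpow (z : ℤ) :
    ((B ^ z : (Matrix (Fin 2) (Fin 2) ℤ)ˣ) : Matrix (Fin 2) (Fin 2) ℤ) = !![1, 0; z, 1] := by
  induction z using Int.induction_on with
  | zero => simp [one_fin_two]
  | succ n ih =>
    rw [_root_.zpow_add_one, Units.val_mul, ih]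
    exact lowerShear_mul_lowerShear _ _
  | pred n ih =>
    rw [_root_.zpow_sub_one, Units.val_mul, ih]
    exact (lowerShear_mul_lowerShear (-n : ℤ) (-1)).trans (by rw [sub_eq_add_neg])

theorem case_bc_negone_negone (a : ℤ) :
    !![a, -1; -1, 0] =
    ((A * B⁻¹ * A ^ 2 * B⁻¹ * A * C * B⁻¹ * A * B ^ (-a - 1) :
        (Matrix (Fin 2) (Fin 2) ℤ)ˣ) : Matrix (Fin 2) (Fin 2) ℤ) := by
  rw [← zpow_neg_one B]
  simp only [Units.val_mul, Units.val_pow_eq_pow_val, val_B_zpow]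
  simp [A, C, sq]
end

section
/- Let M = [[a,b],[c,d]] ∈ GL(2,ℤ) and let p_k, q_k be convergents of a continued fraction of b/d. Define α_k(x,y) = (−1)^⌊k/2⌋·(q_k·x − p_k·y + (−1)^k·(q_{k−1}·x − p_{k−1}·y)) and γ_k(x,y) = (−1)^⌊k/2⌋·(p_k·y − q_k·x). Then the matrix P_k = [[α_k(b,d), α_k(b−a,d−c)],[γ_k(b,d), γ_k(b−a,d−c)]] has determinant equal to det(M); in particular P_k ∈ GL(2,ℤ). -/
open Matrix

theorem det_Pk (a b c d : ℤ) (hd : d ≠ 0)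
    (hdet : a * d - b * c = 1 ∨ a * d - b * c = -1)
    (j : ℕ) (p q : ℕ → ℤ) (k : ℕ) (hk1 : 1 ≤ k) (hkj : k ≤ j)
    (hkey : p k * q (k - 1) - p (k - 1) * q k = (-1) ^ k)
    (α γ : ℤ → ℤ → ℤ)
    (hα : ∀ x y, α x y =
      (-1) ^ (k / 2) * (q k * x - p k * y + (-1) ^ k * (q (k - 1) * x - p (k - 1) * y)))
    (hγ : ∀ x y, γ x y = (-1) ^ (k / 2) * (p k * y - q k * x)) :
    (!![α b d, α (b - a) (d - c); γ b d, γ (b - a) (d - c)]).det = a * d - b * c ∧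
    ((!![α b d, α (b - a) (d - c); γ b d, γ (b - a) (d - c)]).det = 1 ∨
     (!![α b d, α (b - a) (d - c); γ b d, γ (b - a) (d - c)]).det = -1) := by
  have hs : ((-1:ℤ)) ^ (k / 2) * (-1) ^ (k / 2) = 1 := by
    rw [← pow_add, ← two_mul, pow_mul]; norm_num
  have he : ((-1:ℤ)) ^ k * (-1) ^ k = 1 := by
    rw [← pow_add, ← two_mul, pow_mul]; norm_num
  have hmain : (!![α b d, α (b - a) (d - c); γ b d, γ (b - a) (d - c)]).det
      = a * d - b * c := by
    rw [Matrix.det_fin_two_of, hα, hα, hγ, hγ]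
    rw [show ((-1:ℤ)) ^ k = p k * q (k - 1) - p (k - 1) * q k from hkey.symm] at *
    generalize hP : p k = P at *
    generalize hQ : q k = Q at *
    generalize hP' : p (k - 1) = P' at *
    generalize hQ' : q (k - 1) = Q' at *
    generalize hS : ((-1:ℤ)) ^ (k / 2) = S at *
    linear_combination ((a * d - b * c) * (P * Q' - P' * Q) * (P * Q' - P' * Q)) * hs
      + (a * d - b * c) * he
  exact ⟨hmain, hmain ▸ hdet⟩
end

section
/- With P_k defined by the entries α_k, γ_k as above (and P₀ = A⁻¹MA⁻¹B = [[b−d, b+c−(a+d)],[d, d−c]]), the recursion P_k = B⁻¹·A^(2+(−1)^k·n_k)·P_{k−1} holds for all 1 ≤ k ≤ j. -/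
open Matrix

/-!
Both sides are linear in the columns `(b, d)` and `(b - a, d - c)` of `N = !![b, b - a; d, d - c]`:
`P k = convergentMatrix p q k * N` for `k ≥ 1`, where `convergentMatrix p q k` is the matrix of
`(x, y) ↦ (α_k(x, y), γ_k(x, y))`, while `P 0 = !![1, -1; 0, 1] * N` (the formula for `α_0`
would read `q (0 - 1) = q 0` in `ℕ`). So the claim is a recursion for `convergentMatrix`, a polynomial identity in the convergents once
the recurrences for `p`, `q` and the sign rules `(-1)^⌊(k+1)/2⌋ = (-1)^k (-1)^⌊k/2⌋`,
`(-1)^⌊(k+2)/2⌋ = -(-1)^⌊k/2⌋` are substituted.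
-/

lemma A_zpow (m : ℤ) :
    ((A ^ m : (Matrix (Fin 2) (Fin 2) ℤ)ˣ) : Matrix (Fin 2) (Fin 2) ℤ) = !![1, m; 0, 1] := by
  induction m using Int.induction_on with
  | zero => simp [one_fin_two]
  | succ k ih =>
    rw [_root_.zpow_add_one, Units.val_mul, ih]
    simp [A]
    ring
  | pred k ih =>
    rw [_root_.zpow_sub_one, Units.val_mul, ih]
    simp [A]
    ring

lemma B_inv_mul_A_zpow (m : ℤ) :
    ((B⁻¹ * A ^ m : (Matrix (Fin 2) (Fin 2) ℤ)ˣ) : Matrix (Fin 2) (Fin 2) ℤ) =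
      !![1, m; -1, 1 - m] := by
  rw [Units.val_mul, A_zpow]
  simp [B]
  ring

section Signs

variable {R : Type*} [Monoid R] [HasDistribNeg R]

lemma neg_one_pow_succ_div_two (k : ℕ) :
    (-1 : R) ^ ((k + 1) / 2) = (-1) ^ k * (-1) ^ (k / 2) := by
  rcases Nat.even_or_odd' k with ⟨t, rfl | rfl⟩
  · rw [show (2 * t + 1) / 2 = t by omega, show 2 * t / 2 = t by omega, pow_mul]
    simp
  · rw [show (2 * t + 1 + 1) / 2 = t + 1 by omega, show (2 * t + 1) / 2 = t by omega, pow_succ,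
      pow_succ, pow_mul]
    simp

lemma neg_one_pow_add_two_div_two (k : ℕ) :
    (-1 : R) ^ ((k + 2) / 2) = -(-1) ^ (k / 2) := by
  rw [show (k + 2) / 2 = k / 2 + 1 by omega, pow_succ, mul_neg_one]

end Signs

section ConvergentMatrix

variable {R : Type*} [CommRing R] (p q : ℕ → R)

def convergentMatrix (k : ℕ) : Matrix (Fin 2) (Fin 2) R :=
  (-1) ^ (k / 2) • !![q k + (-1) ^ k * q (k - 1), -(p k + (-1) ^ k * p (k - 1)); -q k, p k]

lemma convergentMatrix_one {n : R} (hp0 : p 0 = 1) (hq0 : q 0 = 0) (hp1 : p 1 = n)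
    (hq1 : q 1 = 1) :
    let m := 2 + (-1) ^ 1 * n
    convergentMatrix p q 1 = !![1, m; -1, 1 - m] * !![1, -1; 0, 1] := by
  ext i j
  fin_cases i <;> fin_cases j <;> simp [convergentMatrix, hp0, hq0, hp1, hq1] <;> ring

lemma convergentMatrix_add_two {k : ℕ} {n : R} (hp : p (k + 2) = n * p (k + 1) + p k)
    (hq : q (k + 2) = n * q (k + 1) + q k) :
    let m := 2 + (-1) ^ (k + 2) * n
    convergentMatrix p q (k + 2) = !![1, m; -1, 1 - m] * convergentMatrix p q (k + 1) := by
  have hk1 : (-1 : R) ^ (k + 1) = -(-1) ^ k := by rw [pow_succ, mul_neg_one]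
  have hk2 : (-1 : R) ^ (k + 2) = (-1) ^ k := by rw [pow_succ, hk1, neg_mul_neg, mul_one]
  simp only [convergentMatrix, show k + 2 - 1 = k + 1 by omega, Nat.add_sub_cancel, hp, hq]
  rw [neg_one_pow_add_two_div_two, neg_one_pow_succ_div_two, hk1, hk2]
  rcases neg_one_pow_eq_or R k with hk | hk <;>
  · ext i j
    fin_cases i <;> fin_cases j <;> simp [hk] <;> ring

end ConvergentMatrix

theorem P_recursion_general (a b c d : ℤ)
    (j : ℕ) (n p q : ℕ → ℤ)
    (hp0 : p 0 = 1) (hq0 : q 0 = 0) (hp1 : p 1 = n 1) (hq1 : q 1 = 1)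
    (hp : ∀ i, 2 ≤ i → i ≤ j → p i = n i * p (i - 1) + p (i - 2))
    (hq : ∀ i, 2 ≤ i → i ≤ j → q i = n i * q (i - 1) + q (i - 2))
    (α γ : ℕ → ℤ → ℤ → ℤ)
    (hα : ∀ k x y, α k x y =
      (-1) ^ (k / 2) * (q k * x - p k * y + (-1) ^ k * (q (k - 1) * x - p (k - 1) * y)))
    (hγ : ∀ k x y, γ k x y = (-1) ^ (k / 2) * (p k * y - q k * x))
    (P : ℕ → Matrix (Fin 2) (Fin 2) ℤ)
    (hP0 : P 0 = !![b - d, b + c - (a + d); d, d - c])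
    (hPk : ∀ k, 1 ≤ k → P k =
      !![α k b d, α k (b - a) (d - c); γ k b d, γ k (b - a) (d - c)]) :
    ∀ k, 1 ≤ k → k ≤ j →
      P k = ((B⁻¹ * A ^ ((2 : ℤ) + (-1) ^ k * n k) : (Matrix (Fin 2) (Fin 2) ℤ)ˣ) :
        Matrix (Fin 2) (Fin 2) ℤ) * P (k - 1) := by
  set N : Matrix (Fin 2) (Fin 2) ℤ := !![b, b - a; d, d - c]
  have hP0N : P 0 = !![1, -1; 0, 1] * N := by
    rw [hP0]
    ext r s
    fin_cases r <;> fin_cases s <;> simp [N] <;> ring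
  have hPN : ∀ k, 1 ≤ k → P k = convergentMatrix p q k * N := by
    intro k hk
    rw [hPk k hk]
    ext r s
    fin_cases r <;> fin_cases s <;> simp [N, convergentMatrix, hα, hγ] <;> ring
  intro k hk hkj
  rw [B_inv_mul_A_zpow]
  obtain ⟨k, rfl⟩ : ∃ i, k = i + 1 := ⟨k - 1, by omega⟩
  rcases k with _ | k
  · rw [hPN 1 le_rfl, hP0N, convergentMatrix_one p q hp0 hq0 hp1 hq1, ← mul_assoc]
  · rw [hPN (k + 2) (by omega), Nat.add_sub_cancel, hPN (k + 1) (by omega), ← mul_assoc,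
      convergentMatrix_add_two p q (hp (k + 2) (by omega) hkj) (hq (k + 2) (by omega) hkj)]

theorem P_recursion (a b c d : ℤ) (hd : d ≠ 0)
    (hdet : a * d - b * c = 1 ∨ a * d - b * c = -1)
    (j : ℕ) (n p q : ℕ → ℤ)
    (hn : ∀ i, 2 ≤ i → i ≤ j → 1 ≤ n i)
    (hp0 : p 0 = 1) (hq0 : q 0 = 0) (hp1 : p 1 = n 1) (hq1 : q 1 = 1)
    (hp : ∀ i, 2 ≤ i → i ≤ j → p i = n i * p (i - 1) + p (i - 2))
    (hq : ∀ i, 2 ≤ i → i ≤ j → q i = n i * q (i - 1) + q (i - 2))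
    (hbd : p j * d = q j * b)
    (α γ : ℕ → ℤ → ℤ → ℤ)
    (hα : ∀ k x y, α k x y =
      (-1) ^ (k / 2) * (q k * x - p k * y + (-1) ^ k * (q (k - 1) * x - p (k - 1) * y)))
    (hγ : ∀ k x y, γ k x y = (-1) ^ (k / 2) * (p k * y - q k * x))
    (P : ℕ → Matrix (Fin 2) (Fin 2) ℤ)
    (hP0 : P 0 = !![b - d, b + c - (a + d); d, d - c])
    (hPk : ∀ k, 1 ≤ k → P k =
      !![α k b d, α k (b - a) (d - c); γ k b d, γ k (b - a) (d - c)]) :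
    ∀ k, 1 ≤ k → k ≤ j →
      P k = ((B⁻¹ * A ^ ((2 : ℤ) + (-1) ^ k * n k) : (Matrix (Fin 2) (Fin 2) ℤ)ˣ) :
        Matrix (Fin 2) (Fin 2) ℤ) * P (k - 1) :=
  P_recursion_general a b c d j n p q hp0 hq0 hp1 hq1 hp hq α γ hα hγ P hP0 hPk
end

section
/- With notation as above, the final matrix P_j equals (−1)^⌊j/2⌋·sgn(d)·[[1, 1−det(M)+b_j],[0, det(M)]], where b_j := (−1)^j·sgn(d)·(p_{j−1}·c − q_{j−1}·a); equivalently P_j = (−1)^⌊j/2⌋·sgn(d)·(C·A²)^((1−det M)/2)·A^{b_j}. -/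
open Matrix

theorem P_j_final (a b c d : ℤ) (hd : d ≠ 0)
    (hdet : a * d - b * c = 1 ∨ a * d - b * c = -1)
    (j : ℕ) (p q : ℕ → ℤ)
    (hqj : 0 < q j)
    (hbd : p j * d = q j * b)
    (hcop : IsCoprime (p j) (q j))
    (hkey : p j * q (j - 1) - p (j - 1) * q j = (-1) ^ j)
    (α γ : ℤ → ℤ → ℤ)
    (hα : ∀ x y, α x y =
      (-1) ^ (j / 2) * (q j * x - p j * y + (-1) ^ j * (q (j - 1) * x - p (j - 1) * y)))
    (hγ : ∀ x y, γ x y = (-1) ^ (j / 2) * (p j * y - q j * x)) :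
    !![α b d, α (b - a) (d - c); γ b d, γ (b - a) (d - c)] =
      ((-1) ^ (j / 2) * Int.sign d) •
        !![1, 1 - (a * d - b * c) + (-1) ^ j * Int.sign d * (p (j - 1) * c - q (j - 1) * a);
           0, a * d - b * c] := by
  set s : ℤ := Int.sign d with hs
  have hs2 : s * s = 1 := by
    rcases hd.lt_or_gt with h | h
    · simp [hs, Int.sign_eq_neg_one_of_neg h]
    · simp [hs, Int.sign_eq_one_of_pos h]
  have hε : ((-1 : ℤ) ^ j) * ((-1 : ℤ) ^ j) = 1 := by
    rw [← pow_add]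
    simp [pow_add, pow_mul, ← two_mul]
  -- coprimality of d and b
  have hdb : IsCoprime d b := by
    rcases hdet with h | h
    · exact ⟨a, -c, by linarith⟩
    · exact ⟨-a, c, by linarith⟩
  -- q j ∣ d
  have h1 : q j ∣ d := by
    have : q j ∣ p j * d := Dvd.intro b (by linarith)
    exact (hcop.symm.dvd_of_dvd_mul_left this)
  -- d ∣ q j
  have h2 : d ∣ q j := by
    have : d ∣ q j * b := ⟨p j, by linarith⟩
    exact (hdb.dvd_of_dvd_mul_right this)
  have habs : q j = |d| := by
    refine Int.dvd_antisymm hqj.le (abs_nonneg d) ((dvd_abs _ _).mpr h1) ((abs_dvd _ _).mpr h2)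
  have hq : q j = s * d := by
    rw [habs, ← Int.sign_mul_abs d, hs]
    rcases hd.lt_or_gt with h | h
    · simp [Int.sign_eq_neg_one_of_neg h]
    · simp [Int.sign_eq_one_of_pos h]
  have hp : p j = s * b := by
    have := hbd
    rw [hq] at this
    have h3 : p j * d = (s * b) * d := by linarith
    exact mul_right_cancel₀ hd h3
  rw [hq, hp] at hkey
  -- key fact: q(j-1)*b - p(j-1)*d = s * (-1)^j
  have hX : q (j - 1) * b - p (j - 1) * d = s * (-1) ^ j := by
    linear_combination s * hkey - (q (j - 1) * b - p (j - 1) * d) * hs2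
  ext i k
  fin_cases i <;> fin_cases k <;>
    simp [hα, hγ, hq, hp, Matrix.smul_apply]
  · linear_combination ((-1 : ℤ) ^ j) * hX + s * hε
  · linear_combination ((-1 : ℤ) ^ (j / 2) * (-1) ^ j) * hX -
      ((-1 : ℤ) ^ (j / 2) * (-1) ^ j * (p (j - 1) * c - q (j - 1) * a)) * hs2 +
      ((-1 : ℤ) ^ (j / 2) * s) * hε
  · ring
  · ring
end
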